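/- Let k ≥ 3 be an integer and λ ∈ [−1/(k−1), 0) ∪ (0, 1). Define s_λ : [0, log k] → ℝ by s_λ(ψ(x)) = ψ(λx + (1−λ)/k) for x ∈ [1/k, 1] (this is well-defined since ψ restricted to [1/k,1] is a strictly increasing bijection onto [0, log k]). Then s_λ is not concave near 0: there exists δ ∈ (0, log k) such that s_λ is strictly convex on (0, δ); in particular, for every ε > 0 the restriction of s_λ to [0, min(ε, log k)] is not concave. -/

import Mathlib

open scoped BigOperators

/-- `ψ(x) = log k + x log x + (1-x) log((1-x)/(k-1))`. -/
noncomputable def psi (k : ℕ) (x : ℝ) : ℝ :=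
  Real.log (k : ℝ) + x * Real.log x + (1 - x) * Real.log ((1 - x) / ((k : ℝ) - 1))

/-!
Write `c = 1/k` and `T x = c + λ (x - c)`, so that `s ∘ ψ = ψ ∘ T` near `c`, where
`ψ'(c) = 0 < ψ''(c)` and, since `c < 1/2`, `ψ'''(c) < 0`. By Cauchy's mean value theorem every
secant slope of `s` on `ψ '' (c, x₀)` is a value of `φ x = λ ψ'(T x) / ψ'(x)`, so `s` is strictly
convex on `(0, ψ x₀)` as soon as `φ` increases on `(c, x₀)`. The numerator
`N₀ = λ² ψ''(T x) ψ'(x) - λ ψ'(T x) ψ''(x)` of `φ'` vanishes at `c`, and so does its derivative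
`N₁ = λ³ ψ'''(T x) ψ'(x) - λ ψ'(T x) ψ'''(x)`, while `N₁'(c) = λ² (λ - 1) ψ''(c) ψ'''(c) > 0`.
Hence `N₁`, and then `N₀`, is positive just to the right of `c`.
-/

open Set Filter Topology

theorem HasDerivAt.eventually_lt_nhdsGT {f : ℝ → ℝ} {f' x : ℝ} (hf : HasDerivAt f f' x)
    (hf' : 0 < f') : ∀ᶠ y in 𝓝[>] x, f x < f y := by
  have hslope := (hasDerivAt_iff_tendsto_slope.1 hf).eventually (eventually_gt_nhds hf')
  filter_upwards [nhdsGT_le_nhdsNE x hslope, self_mem_nhdsWithin] with y hy (hxy : x < y)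
  rw [slope_def_field] at hy
  exact sub_pos.1 ((div_pos_iff_of_pos_right (sub_pos.2 hxy)).1 hy)

theorem pos_of_hasDerivAt_of_eq_zero {f f' : ℝ → ℝ} {a b : ℝ} (ha : ContinuousAt f a)
    (hf : ∀ x ∈ Ioo a b, HasDerivAt f (f' x) x) (hf' : ∀ x ∈ Ioo a b, 0 < f' x) (h₀ : f a = 0) :
    ∀ x ∈ Ioo a b, 0 < f x := by
  have hmono : StrictMonoOn f (Ico a b) := by
    refine strictMonoOn_of_deriv_pos (convex_Ico a b) (fun x hx => ?_) fun x hx => ?_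
    · rcases hx.1.eq_or_lt with rfl | hax
      · exact ha.continuousWithinAt
      · exact (hf x ⟨hax, hx.2⟩).continuousAt.continuousWithinAt
    · rw [interior_Ico] at hx
      rw [(hf x hx).deriv]
      exact hf' x hx
  intro x hx
  simpa [h₀] using hmono (left_mem_Ico.2 (hx.1.trans hx.2)) (Ioo_subset_Ico_self hx) hx.1

theorem strictMonoOn_div_of_hasDerivAt {f f' g g' : ℝ → ℝ} {a b : ℝ}
    (hf : ∀ x ∈ Ioo a b, HasDerivAt f (f' x) x) (hg : ∀ x ∈ Ioo a b, HasDerivAt g (g' x) x)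
    (hg₀ : ∀ x ∈ Ioo a b, g x ≠ 0) (h : ∀ x ∈ Ioo a b, 0 < f' x * g x - f x * g' x) :
    StrictMonoOn (fun x => f x / g x) (Ioo a b) := by
  have hderiv : ∀ x ∈ Ioo a b, HasDerivAt (fun x => f x / g x)
      ((f' x * g x - f x * g' x) / g x ^ 2) x := fun x hx => (hf x hx).div (hg x hx) (hg₀ x hx)
  refine strictMonoOn_of_deriv_pos (convex_Ioo a b)
    (fun x hx => (hderiv x hx).continuousAt.continuousWithinAt) fun x hx => ?_
  rw [interior_Ioo] at hx
  rw [(hderiv x hx).deriv]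
  exact div_pos (h x hx) (sq_pos_of_ne_zero (hg₀ x hx))

theorem hasDerivAt_add_mul_sub (c lam x : ℝ) : HasDerivAt (fun y => c + lam * (y - c)) lam x := by
  simpa only [mul_one] using (((hasDerivAt_id' x).sub_const c).const_mul lam).const_add c

theorem tendsto_add_mul_sub_nhds (c lam : ℝ) :
    Tendsto (fun y => c + lam * (y - c)) (𝓝 c) (𝓝 c) := by
  simpa using (hasDerivAt_add_mul_sub c lam c).continuousAt.tendsto

theorem exists_strictMonoOn_div_comp_affine {p p₁ p₂ : ℝ → ℝ} {c lam : ℝ}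
    (hp : ∀ᶠ x in 𝓝 c, HasDerivAt p (p₁ x) x) (hp₁ : ∀ᶠ x in 𝓝 c, HasDerivAt p₁ (p₂ x) x)
    (hp₂ : DifferentiableAt ℝ p₂ c) (hc : p c = 0) (hc₁ : 0 < p₁ c) (hc₂ : p₂ c < 0)
    (hlam0 : lam ≠ 0) (hlam1 : lam < 1) :
    ∃ d > c, (∀ x ∈ Ioo c d, 0 < p x) ∧
      StrictMonoOn (fun x => lam * p (c + lam * (x - c)) / p x) (Ioo c d) := by
  set T : ℝ → ℝ := fun x => c + lam * (x - c) with hT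
  have hTc : T c = c := by simp [hT]
  have hTd : ∀ x, HasDerivAt T lam x := hasDerivAt_add_mul_sub c lam
  have hTt : Tendsto T (𝓝 c) (𝓝 c) := tendsto_add_mul_sub_nhds c lam
  have hpT : ∀ᶠ x in 𝓝 c, HasDerivAt (fun y => p (T y)) (p₁ (T x) * lam) x :=
    (hTt.eventually hp).mono fun x h => h.comp x (hTd x)
  have hp₁T : ∀ᶠ x in 𝓝 c, HasDerivAt (fun y => p₁ (T y)) (p₂ (T x) * lam) x :=
    (hTt.eventually hp₁).mono fun x h => h.comp x (hTd x)
  set N₀ : ℝ → ℝ := fun x => lam ^ 2 * p₁ (T x) * p x - lam * p (T x) * p₁ x with hN₀def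
  set N₁ : ℝ → ℝ := fun x => lam ^ 3 * p₂ (T x) * p x - lam * p (T x) * p₂ x with hN₁def
  have hN₀ : ∀ᶠ x in 𝓝 c, HasDerivAt N₀ (N₁ x) x := by
    filter_upwards [hp, hp₁, hpT, hp₁T] with x h h₁ hT' h₁T
    refine (((h₁T.const_mul (lam ^ 2)).mul h).sub ((hT'.const_mul lam).mul h₁)).congr_deriv ?_
    simp only [hN₁def]
    ring
  have hN₁ : HasDerivAt N₁ (lam ^ 2 * (lam - 1) * p₁ c * p₂ c) c := by
    have h₂T : HasDerivAt (fun y => p₂ (T y)) (deriv p₂ c * lam) c :=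
      hp₂.hasDerivAt.comp_of_eq c (hTd c) hTc.symm
    refine (((h₂T.const_mul (lam ^ 3)).mul hp.self_of_nhds).sub
      ((hpT.self_of_nhds.const_mul lam).mul hp₂.hasDerivAt)).congr_deriv ?_
    simp only [hTc, hc]
    ring
  have hN₁c : N₁ c = 0 := by simp [N₁, hTc, hc]
  have hN₁pos : ∀ᶠ x in 𝓝[>] c, 0 < N₁ x := by
    refine hN₁c ▸ hN₁.eventually_lt_nhdsGT ?_
    have : 0 < lam ^ 2 := by positivity
    have : 0 < (1 - lam) * p₁ c * -p₂ c :=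
      mul_pos (mul_pos (sub_pos.2 hlam1) hc₁) (neg_pos.2 hc₂)
    nlinarith
  have hpos : ∀ᶠ x in 𝓝[>] c, 0 < p x := hc ▸ hp.self_of_nhds.eventually_lt_nhdsGT hc₁
  obtain ⟨d, hcd, hd⟩ := mem_nhdsGT_iff_exists_Ioo_subset.1 <|
    ((hp.and (hpT.and hN₀)).filter_mono nhdsWithin_le_nhds).and (hN₁pos.and hpos)
  have hN₀pos : ∀ x ∈ Ioo c d, 0 < N₀ x :=
    pos_of_hasDerivAt_of_eq_zero hN₀.self_of_nhds.continuousAt (fun x hx => (hd hx).1.2.2)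
      (fun x hx => (hd hx).2.1) (by simp [N₀, hTc, hc])
  refine ⟨d, hcd, fun x hx => (hd hx).2.2, strictMonoOn_div_of_hasDerivAt
    (fun x hx => (hd hx).1.2.1.const_mul lam) (fun x hx => (hd hx).1.1)
    (fun x hx => (hd hx).2.2.ne') fun x hx => (hN₀pos x hx).trans_eq ?_⟩
  simp only [hN₀def]
  ring

theorem strictConvexOn_image_of_strictMonoOn_div {ψ ψ' F F' s : ℝ → ℝ} {a b : ℝ}
    (hψ : ∀ x ∈ Ioo a b, HasDerivAt ψ (ψ' x) x) (hψ' : ∀ x ∈ Ioo a b, 0 < ψ' x)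
    (hF : ∀ x ∈ Ioo a b, HasDerivAt F (F' x) x)
    (hmono : StrictMonoOn (fun x => F' x / ψ' x) (Ioo a b))
    (hs : ∀ x ∈ Ioo a b, s (ψ x) = F x) :
    StrictConvexOn ℝ (ψ '' Ioo a b) s := by
  have hcont : ContinuousOn ψ (Ioo a b) := fun x hx => (hψ x hx).continuousAt.continuousWithinAt
  have hψmono : StrictMonoOn ψ (Ioo a b) := by
    refine strictMonoOn_of_deriv_pos (convex_Ioo a b) hcont fun x hx => ?_
    rw [interior_Ioo] at hx
    rw [(hψ x hx).deriv]
    exact hψ' x hx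
  have hslope : ∀ x ∈ Ioo a b, ∀ y ∈ Ioo a b, x < y →
      ∃ ξ ∈ Ioo x y, (s (ψ y) - s (ψ x)) / (ψ y - ψ x) = F' ξ / ψ' ξ := by
    intro x hx y hy hxy
    have hsub : Icc x y ⊆ Ioo a b := Icc_subset_Ioo hx.1 hy.2
    obtain ⟨ξ, hξ, hcauchy⟩ := exists_ratio_hasDerivAt_eq_ratio_slope F F' hxy
      (fun z hz => (hF z (hsub hz)).continuousAt.continuousWithinAt)
      (fun z hz => hF z (hsub (Ioo_subset_Icc_self hz))) ψ ψ'
      (hcont.mono hsub) (fun z hz => hψ z (hsub (Ioo_subset_Icc_self hz)))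
    refine ⟨ξ, hξ, ?_⟩
    rw [hs x hx, hs y hy, div_eq_div_iff (sub_pos.2 (hψmono hx hy hxy)).ne'
      (hψ' ξ (hsub (Ioo_subset_Icc_self hξ))).ne']
    linarith
  refine strictConvexOn_of_slope_strict_mono_adjacent
    ((isPreconnected_Ioo.image ψ hcont).convex) ?_
  rintro _ v _ ⟨x, hx, rfl⟩ ⟨z, hz, rfl⟩ hxv hvz
  obtain ⟨y, hy, rfl⟩ : v ∈ ψ '' Ioo a b :=
    (isPreconnected_Ioo.image ψ hcont).ordConnected.out (mem_image_of_mem ψ hx)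
      (mem_image_of_mem ψ hz) ⟨hxv.le, hvz.le⟩
  have hxy := (hψmono.lt_iff_lt hx hy).1 hxv
  have hyz := (hψmono.lt_iff_lt hy hz).1 hvz
  obtain ⟨ξ, hξ, hξeq⟩ := hslope x hx y hy hxy
  obtain ⟨η, hη, hηeq⟩ := hslope y hy z hz hyz
  rw [hξeq, hηeq]
  exact hmono ⟨hx.1.trans hξ.1, hξ.2.trans hy.2⟩ ⟨hy.1.trans hη.1, hη.2.trans hz.2⟩
    (hξ.2.trans hη.1)

theorem StrictConvexOn.not_concaveOn_of_nontrivial {𝕜 E β : Type*} [Field 𝕜] [LinearOrder 𝕜]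
    [IsStrictOrderedRing 𝕜] [AddCommMonoid E] [AddCommMonoid β] [PartialOrder β] [SMul 𝕜 E]
    [SMul 𝕜 β] {s t : Set E} {f : E → β} (hf : StrictConvexOn 𝕜 s f) (hst : (s ∩ t).Nontrivial) :
    ¬ ConcaveOn 𝕜 t f := by
  intro hg
  obtain ⟨x, hx, y, hy, hxy⟩ := hst
  have h2 : (0 : 𝕜) < 1 / 2 := by norm_num
  exact (hg.2 hx.2 hy.2 h2.le h2.le (by norm_num)).not_gt (hf.2 hx.1 hy.1 hxy h2 h2 (by norm_num))

section Psi

open Real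

variable {k : ℕ} {x : ℝ}

noncomputable def psiDeriv (k : ℕ) (x : ℝ) : ℝ :=
  log x - log (1 - x) + log ((k : ℝ) - 1)

noncomputable def psiDeriv2 (x : ℝ) : ℝ := x⁻¹ + (1 - x)⁻¹

noncomputable def psiDeriv3 (x : ℝ) : ℝ := -(x ^ 2)⁻¹ + ((1 - x) ^ 2)⁻¹

theorem psi_eq_sub_mul_log (hk : k ≠ 1) (x : ℝ) :
    psi k x = log k + x * log x + (1 - x) * log (1 - x) - (1 - x) * log ((k : ℝ) - 1) := by
  have hk1 : (k : ℝ) - 1 ≠ 0 := sub_ne_zero.2 (mod_cast hk)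
  rcases eq_or_ne (1 - x) 0 with h | h
  · simp [psi, h]
  · rw [psi, log_div h hk1]
    ring

theorem continuous_psi (hk : k ≠ 1) : Continuous (psi k) := by
  have h := continuous_mul_log.comp (continuous_sub_left (1 : ℝ))
  rw [funext (psi_eq_sub_mul_log hk)]
  exact ((continuous_const.add continuous_mul_log).add h).sub (by fun_prop)

theorem hasDerivAt_psi (hk : k ≠ 1) (hx : x ∈ Ioo 0 1) : HasDerivAt (psi k) (psiDeriv k x) x := by
  have h₁ := hasDerivAt_mul_log hx.1.ne'
  have h₂ := (hasDerivAt_mul_log (sub_pos.2 hx.2).ne').comp x ((hasDerivAt_id x).const_sub 1)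
  have h₃ := ((hasDerivAt_id x).const_sub 1).mul_const (log ((k : ℝ) - 1))
  rw [funext (psi_eq_sub_mul_log hk)]
  refine ((((hasDerivAt_const x (log (k : ℝ))).add h₁).add h₂).sub h₃).congr_deriv ?_
  rw [psiDeriv]
  ring

theorem hasDerivAt_psiDeriv (hx : x ∈ Ioo 0 1) : HasDerivAt (psiDeriv k) (psiDeriv2 x) x := by
  have h := (hasDerivAt_log (sub_pos.2 hx.2).ne').comp x ((hasDerivAt_id x).const_sub 1)
  refine (((hasDerivAt_log hx.1.ne').sub h).add_const _).congr_deriv ?_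
  rw [psiDeriv2]
  ring

theorem hasDerivAt_psiDeriv2 (hx : x ∈ Ioo 0 1) : HasDerivAt psiDeriv2 (psiDeriv3 x) x := by
  have h := (hasDerivAt_inv (sub_pos.2 hx.2).ne').comp x ((hasDerivAt_id x).const_sub 1)
  refine ((hasDerivAt_inv hx.1.ne').add h).congr_deriv ?_
  rw [psiDeriv3]
  ring

theorem differentiableAt_psiDeriv3 (hx : x ∈ Ioo 0 1) : DifferentiableAt ℝ psiDeriv3 x := by
  have h₀ : x ^ 2 ≠ 0 := pow_ne_zero 2 hx.1.ne'
  have h₁ : (1 - x) ^ 2 ≠ 0 := pow_ne_zero 2 (sub_pos.2 hx.2).ne'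
  unfold psiDeriv3
  fun_prop (disch := assumption)

theorem psiDeriv2_pos (hx : x ∈ Ioo 0 1) : 0 < psiDeriv2 x :=
  add_pos (inv_pos.2 hx.1) (inv_pos.2 (sub_pos.2 hx.2))

theorem psiDeriv3_neg (hx₀ : 0 < x) (hx : x < 1 / 2) : psiDeriv3 x < 0 := by
  have h : x ^ 2 < (1 - x) ^ 2 := by nlinarith
  have := inv_strictAnti₀ (by positivity) h
  rw [psiDeriv3]
  linarith

theorem psi_one : psi k 1 = log k := by
  simp [psi]

theorem psi_one_div (hk : 1 < k) : psi k (1 / k) = 0 := by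
  have hk' : (1 : ℝ) < k := mod_cast hk
  have h : (1 - 1 / (k : ℝ)) / ((k : ℝ) - 1) = 1 / k := by
    rw [div_eq_div_iff (by linarith) (by linarith)]
    field_simp
  rw [psi, h, one_div, log_inv]
  ring

theorem psiDeriv_one_div (hk : 1 < k) : psiDeriv k (1 / k) = 0 := by
  have hk' : (1 : ℝ) < k := mod_cast hk
  have h : (1 : ℝ) - 1 / k = ((k : ℝ) - 1) / k := by
    field_simp
  rw [psiDeriv, h, log_div one_ne_zero (by linarith), log_div (by linarith) (by linarith), log_one]
  ring

theorem psiDeriv_pos (hk : 1 < k) (hx : 1 / (k : ℝ) < x) (hx₁ : x < 1) : 0 < psiDeriv k x := by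
  have hk' : (1 : ℝ) < k := mod_cast hk
  have hx₀ : 0 < x := lt_trans (by positivity) hx
  have hxk : 1 < x * k := by rwa [div_lt_iff₀ (by linarith)] at hx
  have h := log_lt_log (sub_pos.2 hx₁) (by nlinarith : 1 - x < x * ((k : ℝ) - 1))
  rw [log_mul hx₀.ne' (by linarith)] at h
  rw [psiDeriv]
  linarith

theorem strictMonoOn_psi (hk : 1 < k) : StrictMonoOn (psi k) (Icc (1 / (k : ℝ)) 1) := by
  refine strictMonoOn_of_deriv_pos (convex_Icc _ _) (continuous_psi hk.ne').continuousOn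
    fun x hx => ?_
  rw [interior_Icc] at hx
  rw [(hasDerivAt_psi hk.ne' ⟨lt_trans (by positivity) hx.1, hx.2⟩).deriv]
  exact psiDeriv_pos hk hx.1 hx.2

end Psi

theorem exists_strictConvexOn_Ioo_psi {k : ℕ} (hk : 3 ≤ k) {lam : ℝ} (hlam0 : lam ≠ 0)
    (hlam1 : lam < 1) {s : ℝ → ℝ}
    (hs : ∀ x ∈ Icc (1 / (k : ℝ)) 1, s (psi k x) = psi k (lam * x + (1 - lam) / k)) :
    ∃ x₀ ∈ Ioo (1 / (k : ℝ)) 1, StrictConvexOn ℝ (Ioo 0 (psi k x₀)) s := by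
  have hk1 : 1 < k := by omega
  set c : ℝ := 1 / k with hc
  have hk3 : (3 : ℝ) ≤ k := mod_cast hk
  have hc01 : c ∈ Ioo 0 1 := ⟨by positivity, by rw [hc, div_lt_one] <;> linarith⟩
  have hc2 : c < 1 / 2 := by rw [hc]; gcongr; linarith
  have hnhds : Ioo 0 1 ∈ 𝓝 c := Ioo_mem_nhds hc01.1 hc01.2
  obtain ⟨d₁, hcd₁, hpos, hmono⟩ := exists_strictMonoOn_div_comp_affine (lam := lam)
    (eventually_of_mem hnhds fun x hx => hasDerivAt_psiDeriv hx)
    (eventually_of_mem hnhds fun x hx => hasDerivAt_psiDeriv2 hx)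
    (differentiableAt_psiDeriv3 hc01) (psiDeriv_one_div hk1) (psiDeriv2_pos hc01)
    (psiDeriv3_neg hc01.1 hc2) hlam0 hlam1
  have hT : ∀ᶠ x in 𝓝[>] c, x < 1 ∧ c + lam * (x - c) ∈ Ioo 0 1 :=
    ((eventually_lt_nhds hc01.2).and
      ((tendsto_add_mul_sub_nhds c lam).eventually_mem hnhds)).filter_mono nhdsWithin_le_nhds
  obtain ⟨d₂, hcd₂, hd₂⟩ := mem_nhdsGT_iff_exists_Ioo_subset.1 hT
  obtain ⟨x₀, hcx₀, hx₀⟩ := exists_between (lt_min hcd₁ hcd₂)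
  have hsub₁ : Ioo c x₀ ⊆ Ioo c d₁ := Ioo_subset_Ioo_right (hx₀.le.trans (min_le_left _ _))
  have hsub₂ : Ioo c x₀ ⊆ Ioo c d₂ := Ioo_subset_Ioo_right (hx₀.le.trans (min_le_right _ _))
  have hx₀1 : x₀ < 1 := (hd₂ ⟨hcx₀, hx₀.trans_le (min_le_right _ _)⟩).1
  have hmem : ∀ x ∈ Ioo c x₀, x ∈ Ioo 0 1 := fun x hx =>
    ⟨hc01.1.trans hx.1, hx.2.trans hx₀1⟩
  have hF : ∀ x ∈ Ioo c x₀, HasDerivAt (fun x => psi k (c + lam * (x - c)))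
      (lam * psiDeriv k (c + lam * (x - c))) x := fun x hx => by
    have hTx : c + lam * (x - c) ∈ Ioo 0 1 := (hd₂ (hsub₂ hx)).2
    exact ((hasDerivAt_psi hk1.ne' hTx).comp x (hasDerivAt_add_mul_sub c lam x)).congr_deriv
      (mul_comm _ _)
  have hconv := strictConvexOn_image_of_strictMonoOn_div (s := s)
    (fun x hx => hasDerivAt_psi hk1.ne' (hmem x hx)) (fun x hx => hpos x (hsub₁ hx)) hF
    (hmono.mono hsub₁) fun x hx => by
      rw [hs x ⟨hx.1.le, (hmem x hx).2.le⟩, hc]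
      ring_nf
  refine ⟨x₀, ⟨hcx₀, hx₀1⟩, hconv.subset ?_ (convex_Ioo _ _)⟩
  rw [← psi_one_div hk1]
  exact intermediate_value_Ioo hcx₀.le (continuous_psi hk1.ne').continuousOn

theorem s_lambda_not_concave_near_zero_general (k : ℕ) (hk : 3 ≤ k)
    (lam : ℝ) (hlam2 : lam < 1) (hlam0 : lam ≠ 0)
    (s : ℝ → ℝ)
    (hs : ∀ x ∈ Set.Icc (1 / (k : ℝ)) 1, s (psi k x) = psi k (lam * x + (1 - lam) / (k : ℝ))) :
    ∃ δ ∈ Set.Ioo (0 : ℝ) (Real.log (k : ℝ)),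
      StrictConvexOn ℝ (Set.Ioo (0 : ℝ) δ) s ∧
      ∀ ε : ℝ, 0 < ε →
        ¬ ConcaveOn ℝ (Set.Icc (0 : ℝ) (min ε (Real.log (k : ℝ)))) s := by
  obtain ⟨x₀, hx₀, hconv⟩ := exists_strictConvexOn_Ioo_psi hk hlam0 hlam2 hs
  have hk1 : 1 < k := by omega
  have hδ₀ : 0 < psi k x₀ := psi_one_div hk1 ▸ strictMonoOn_psi hk1
    (left_mem_Icc.2 (hx₀.1.trans hx₀.2).le) (Ioo_subset_Icc_self hx₀) hx₀.1
  have hδ₁ : psi k x₀ < Real.log k := psi_one ▸ strictMonoOn_psi hk1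
    (Ioo_subset_Icc_self hx₀) (right_mem_Icc.2 (hx₀.1.trans hx₀.2).le) hx₀.2
  refine ⟨psi k x₀, ⟨hδ₀, hδ₁⟩, hconv, fun ε hε => hconv.not_concaveOn_of_nontrivial ?_⟩
  have hm : 0 < min (psi k x₀) (min ε (Real.log k)) := lt_min hδ₀ (lt_min hε (hδ₀.trans hδ₁))
  exact (Ioo_infinite hm).nontrivial.mono fun y hy =>
    ⟨⟨hy.1, hy.2.trans_le (min_le_left _ _)⟩, hy.1.le, hy.2.le.trans (min_le_right _ _)⟩

/-- For `k ≥ 3` and `λ ∈ [−1/(k−1),0) ∪ (0,1)`, the function `s_λ` defined on `[0, log k]`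
by `s_λ(ψ(x)) = ψ(λx + (1−λ)/k)` is not concave near `0`: it is strictly convex on some
interval `(0,δ)`, and for every `ε > 0` its restriction to `[0, min(ε, log k)]` is not
concave. -/
theorem s_lambda_not_concave_near_zero (k : ℕ) (hk : 3 ≤ k)
    (lam : ℝ) (hlam1 : -(1 / ((k : ℝ) - 1)) ≤ lam) (hlam2 : lam < 1) (hlam0 : lam ≠ 0)
    (s : ℝ → ℝ)
    (hs : ∀ x ∈ Set.Icc (1 / (k : ℝ)) 1, s (psi k x) = psi k (lam * x + (1 - lam) / (k : ℝ))) :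
    ∃ δ ∈ Set.Ioo (0 : ℝ) (Real.log (k : ℝ)),
      StrictConvexOn ℝ (Set.Ioo (0 : ℝ) δ) s ∧
      ∀ ε : ℝ, 0 < ε →
        ¬ ConcaveOn ℝ (Set.Icc (0 : ℝ) (min ε (Real.log (k : ℝ)))) s :=
  s_lambda_not_concave_near_zero_general k hk lam hlam2 hlam0 s hs
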